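/- Let 𝓙 = [[𝓙₁,𝓙₂],[𝓙₃,𝓙₄]] be a generalized complex structure on a finite-dimensional real vector space V, let W ⊆ V be a subspace, and let 𝓚 = [[𝓚₁,𝓚₂],[𝓚₃,𝓚₄]] be a generalized complex structure on W. Then W, equipped with 𝓚, satisfies the graph condition if and only if 𝓚₁ = 𝓙₁|_W (in particular W is invariant under 𝓙₁) and 𝓚₃(w) = 𝓙₃(w)|_W for all w ∈ W. -/

import Mathlib

open Module LinearMap

noncomputable def gcPair (V : Type*) [AddCommGroup V] [Module ℝ V]
    (x y : V × Module.Dual ℝ V) : ℝ :=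
  -(1/2) * (x.2 y.1 + y.2 x.1)

noncomputable def IsGCS (V : Type*) [AddCommGroup V] [Module ℝ V]
    (J : (V × Module.Dual ℝ V) →ₗ[ℝ] (V × Module.Dual ℝ V)) : Prop :=
  J ∘ₗ J = -LinearMap.id ∧ ∀ x y, gcPair V (J x) (J y) = gcPair V x y

section Blocks

variable (V : Type*) [AddCommGroup V] [Module ℝ V]

noncomputable def blk1 (J : (V × Module.Dual ℝ V) →ₗ[ℝ] (V × Module.Dual ℝ V)) :
    V →ₗ[ℝ] V :=
  (LinearMap.fst ℝ V (Module.Dual ℝ V)) ∘ₗ J ∘ₗ (LinearMap.inl ℝ V (Module.Dual ℝ V))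

noncomputable def blk2 (J : (V × Module.Dual ℝ V) →ₗ[ℝ] (V × Module.Dual ℝ V)) :
    Module.Dual ℝ V →ₗ[ℝ] V :=
  (LinearMap.fst ℝ V (Module.Dual ℝ V)) ∘ₗ J ∘ₗ (LinearMap.inr ℝ V (Module.Dual ℝ V))

noncomputable def blk3 (J : (V × Module.Dual ℝ V) →ₗ[ℝ] (V × Module.Dual ℝ V)) :
    V →ₗ[ℝ] Module.Dual ℝ V :=
  (LinearMap.snd ℝ V (Module.Dual ℝ V)) ∘ₗ J ∘ₗ (LinearMap.inl ℝ V (Module.Dual ℝ V))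

noncomputable def blk4 (J : (V × Module.Dual ℝ V) →ₗ[ℝ] (V × Module.Dual ℝ V)) :
    Module.Dual ℝ V →ₗ[ℝ] Module.Dual ℝ V :=
  (LinearMap.snd ℝ V (Module.Dual ℝ V)) ∘ₗ J ∘ₗ (LinearMap.inr ℝ V (Module.Dual ℝ V))

noncomputable def ofBlocks (A : V →ₗ[ℝ] V) (B : Module.Dual ℝ V →ₗ[ℝ] V)
    (C : V →ₗ[ℝ] Module.Dual ℝ V) (D : Module.Dual ℝ V →ₗ[ℝ] Module.Dual ℝ V) :
    (V × Module.Dual ℝ V) →ₗ[ℝ] (V × Module.Dual ℝ V) :=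
  LinearMap.prod
    (A ∘ₗ LinearMap.fst ℝ V (Module.Dual ℝ V) + B ∘ₗ LinearMap.snd ℝ V (Module.Dual ℝ V))
    (C ∘ₗ LinearMap.fst ℝ V (Module.Dual ℝ V) + D ∘ₗ LinearMap.snd ℝ V (Module.Dual ℝ V))

/-- The twist `𝓙̃ = [[𝓙₁,-𝓙₂],[-𝓙₃,𝓙₄]]` of `𝓙`. -/
noncomputable def gcTwist (J : (V × Module.Dual ℝ V) →ₗ[ℝ] (V × Module.Dual ℝ V)) :
    (V × Module.Dual ℝ V) →ₗ[ℝ] (V × Module.Dual ℝ V) :=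
  ofBlocks V (blk1 V J) (-(blk2 V J)) (-(blk3 V J)) (blk4 V J)

end Blocks

section Prod

variable (U V : Type*) [AddCommGroup U] [Module ℝ U] [AddCommGroup V] [Module ℝ V]

/-- The natural identification `(U⊕V) ⊕ (U⊕V)* ≅ (U ⊕ U*) ⊕ (V ⊕ V*)`. -/
noncomputable def prodPack :
    ((U × V) × Module.Dual ℝ (U × V)) ≃ₗ[ℝ]
      (U × Module.Dual ℝ U) × (V × Module.Dual ℝ V) :=
  ((LinearEquiv.refl ℝ (U × V)).prodCongr (Module.dualProdDualEquivDual ℝ U V).symm).trans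
    (LinearEquiv.prodProdProdComm ℝ U V (Module.Dual ℝ U) (Module.Dual ℝ V))

/-- The direct sum of the structures `J_U` and `J_V` on `U ⊕ V`. -/
noncomputable def directSum
    (JU : (U × Module.Dual ℝ U) →ₗ[ℝ] (U × Module.Dual ℝ U))
    (JV : (V × Module.Dual ℝ V) →ₗ[ℝ] (V × Module.Dual ℝ V)) :
    ((U × V) × Module.Dual ℝ (U × V)) →ₗ[ℝ] ((U × V) × Module.Dual ℝ (U × V)) :=
  (prodPack U V).symm.toLinearMap ∘ₗ (LinearMap.prodMap JU JV) ∘ₗ (prodPack U V).toLinearMap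

/-- The twisted product structure on `U ⊕ V`: the direct sum of `𝓙̃_U` and `𝓙_V`. -/
noncomputable def twistedProd
    (JU : (U × Module.Dual ℝ U) →ₗ[ℝ] (U × Module.Dual ℝ U))
    (JV : (V × Module.Dual ℝ V) →ₗ[ℝ] (V × Module.Dual ℝ V)) :
    ((U × V) × Module.Dual ℝ (U × V)) →ₗ[ℝ] ((U × V) × Module.Dual ℝ (U × V)) :=
  directSum U V (gcTwist U JU) JV

end Prod

section Subspaces

variable {X : Type*} [AddCommGroup X] [Module ℝ X]

/-- A subspace `Γ` of a GC vector space `(X, J)` is generalized isotropic if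
`J(Γ ⊕ 0) ⊆ Γ ⊕ Ann(Γ)`. -/
def GenIsotropic (J : (X × Module.Dual ℝ X) →ₗ[ℝ] (X × Module.Dual ℝ X))
    (Γ : Submodule ℝ X) : Prop :=
  ∀ x ∈ Γ, J (x, 0) ∈ Γ.prod Γ.dualAnnihilator

/-- A subspace `Γ` of a GC vector space `(X, J)` is generalized coisotropic if
`J(0 ⊕ Ann(Γ)) ⊆ Γ ⊕ Ann(Γ)`. -/
def GenCoisotropic (J : (X × Module.Dual ℝ X) →ₗ[ℝ] (X × Module.Dual ℝ X))
    (Γ : Submodule ℝ X) : Prop :=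
  ∀ f ∈ Γ.dualAnnihilator, J (0, f) ∈ Γ.prod Γ.dualAnnihilator

/-- A subspace `Γ` of a GC vector space `(X, J)` is generalized Lagrangian if
`Γ ⊕ Ann(Γ)` is stable under `J`. -/
def GenLagrangian (J : (X × Module.Dual ℝ X) →ₗ[ℝ] (X × Module.Dual ℝ X))
    (Γ : Submodule ℝ X) : Prop :=
  ∀ p ∈ Γ.prod Γ.dualAnnihilator, J p ∈ Γ.prod Γ.dualAnnihilator

end Subspaces

/-!
On a point `((u, f u), 0)` of the graph of `f : U → V`, the twisted product structure takes the
value `((𝓙_U₁ u, 𝓙_V₁ (f u)), -𝓙_U₃ u ⊕ 𝓙_V₃ (f u))`. Its first component lies on the graph iff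
`f (𝓙_U₁ u) = 𝓙_V₁ (f u)`, and its second annihilates the graph iff
`𝓙_U₃ u u' = 𝓙_V₃ (f u) (f u')` for all `u'`: the sign of the twist is what turns the
annihilator condition into an equality. The theorem is the case `f = W.subtype`.
-/

section TwistedGraph

variable {U V : Type*} [AddCommGroup U] [Module ℝ U] [AddCommGroup V] [Module ℝ V]

theorem prodPack_apply (x : U × V) (φ : Module.Dual ℝ (U × V)) :
    prodPack U V (x, φ) =
      ((x.1, φ ∘ₗ LinearMap.inl ℝ U V), (x.2, φ ∘ₗ LinearMap.inr ℝ U V)) := rfl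

theorem prodPack_symm_apply (u : U) (f : Module.Dual ℝ U) (v : V) (g : Module.Dual ℝ V) :
    (prodPack U V).symm ((u, f), (v, g)) = ((u, v), f.coprod g) := rfl

theorem gcTwist_apply_inl (J : (V × Module.Dual ℝ V) →ₗ[ℝ] (V × Module.Dual ℝ V)) (v : V) :
    gcTwist V J (v, 0) = (blk1 V J v, -blk3 V J v) := by
  simp [gcTwist, ofBlocks, blk1, blk3]

theorem twistedProd_apply_inl
    (JU : (U × Module.Dual ℝ U) →ₗ[ℝ] (U × Module.Dual ℝ U))
    (JV : (V × Module.Dual ℝ V) →ₗ[ℝ] (V × Module.Dual ℝ V)) (u : U) (v : V) :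
    twistedProd U V JU JV ((u, v), 0) =
      ((blk1 U JU u, blk1 V JV v), (-blk3 U JU u).coprod (blk3 V JV v)) := by
  simp only [twistedProd, directSum, LinearMap.comp_apply, LinearEquiv.coe_coe,
    prodPack_apply, LinearMap.zero_comp, LinearMap.prodMap_apply, gcTwist_apply_inl]
  exact prodPack_symm_apply _ _ _ _

theorem mem_dualAnnihilator_graph_iff (f : U →ₗ[ℝ] V) (φ : Module.Dual ℝ (U × V)) :
    φ ∈ (LinearMap.graph f).dualAnnihilator ↔ ∀ u, φ (u, f u) = 0 := by
  simp [Submodule.mem_dualAnnihilator, LinearMap.mem_graph_iff]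

theorem genIsotropic_twistedProd_graph_iff
    (JU : (U × Module.Dual ℝ U) →ₗ[ℝ] (U × Module.Dual ℝ U))
    (JV : (V × Module.Dual ℝ V) →ₗ[ℝ] (V × Module.Dual ℝ V)) (f : U →ₗ[ℝ] V) :
    GenIsotropic (twistedProd U V JU JV) (LinearMap.graph f) ↔
      ∀ u, f (blk1 U JU u) = blk1 V JV (f u) ∧
        ∀ u', blk3 U JU u u' = blk3 V JV (f u) (f u') := by
  simp only [GenIsotropic, LinearMap.mem_graph_iff, Prod.forall, forall_eq, twistedProd_apply_inl,
    Submodule.mem_prod, mem_dualAnnihilator_graph_iff, LinearMap.coprod_apply,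
    LinearMap.neg_apply, neg_add_eq_zero]
  exact forall_congr' fun u => and_congr eq_comm Iff.rfl

end TwistedGraph

theorem graph_condition_iff_blocks_general
    (V : Type*) [AddCommGroup V] [Module ℝ V]
    (J : (V × Module.Dual ℝ V) →ₗ[ℝ] (V × Module.Dual ℝ V))
    (W : Submodule ℝ V)
    (K : (↥W × Module.Dual ℝ ↥W) →ₗ[ℝ] (↥W × Module.Dual ℝ ↥W)) :
    GenIsotropic (twistedProd ↥W V K J) (LinearMap.graph W.subtype) ↔
      ((∀ w : ↥W, (blk1 ↥W K w : V) = blk1 V J ↑w) ∧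
       (∀ w w' : ↥W, blk3 ↥W K w w' = blk3 V J ↑w ↑w')) :=
  (genIsotropic_twistedProd_graph_iff K J W.subtype).trans forall_and

theorem graph_condition_iff_blocks
    (V : Type*) [AddCommGroup V] [Module ℝ V] [FiniteDimensional ℝ V]
    (J : (V × Module.Dual ℝ V) →ₗ[ℝ] (V × Module.Dual ℝ V)) (hJ : IsGCS V J)
    (W : Submodule ℝ V)
    (K : (↥W × Module.Dual ℝ ↥W) →ₗ[ℝ] (↥W × Module.Dual ℝ ↥W)) (hK : IsGCS ↥W K) :
    GenIsotropic (twistedProd ↥W V K J) (LinearMap.graph W.subtype) ↔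
      ((∀ w : ↥W, (blk1 ↥W K w : V) = blk1 V J ↑w) ∧
       (∀ w w' : ↥W, blk3 ↥W K w w' = blk3 V J ↑w ↑w')) :=
  graph_condition_iff_blocks_general V J W K
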